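/- arXiv:1705.04631 — 5 statements merged into one kernel-verified Lean document; each statement's English description precedes it below -/
import Mathlib

section
/- Let R be a commutative noetherian ring. If the prime spectrum Spec R is an infinite set, then there exists a countably infinite family of prime ideals of R that are pairwise incomparable under inclusion; that is, there is an injective function f : ℕ → Spec R such that for all i ≠ j, f(i) is not contained in f(j). -/
open Ideal Submodule IsLocalRing

universe u

section Artinian

lemma isArtinian_of_surj_scalars {R S M : Type*} [CommRing R] [Ring S] [Algebra R S]
    (hsurj : Function.Surjective (algebraMap R S)) [AddCommGroup M]
    [Module S M] [Module R M] [IsScalarTower R S M] (h : IsArtinian S M) : IsArtinian R M := by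
  rw [isArtinian_iff] at *
  have key : ∀ W : Submodule R M, ∃ W' : Submodule S M, (W' : Set M) = (W : Set M) := by
    intro W
    let W' : Submodule S M :=
      { carrier := W
        add_mem' := fun ha hb => W.add_mem ha hb
        zero_mem' := W.zero_mem
        smul_mem' := fun s x hx => by
          obtain ⟨r, rfl⟩ := hsurj s
          rw [algebraMap_smul]
          exact W.smul_mem r hx }
    exact ⟨W', rfl⟩
  choose f hf using key
  have hmem : ∀ (W : Submodule R M) (x : M), x ∈ f W ↔ x ∈ W := fun W x => by
    rw [← SetLike.mem_coe, hf, SetLike.mem_coe]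
  have hmono : ∀ {W W' : Submodule R M}, W < W' → f W < f W' := by
    intro W W' hlt
    rw [SetLike.lt_iff_le_and_exists] at *
    obtain ⟨hle, x, hx, hx'⟩ := hlt
    exact ⟨fun y hy => (hmem W' y).mpr (hle ((hmem W y).mp hy)), x, (hmem W' x).mpr hx,
      fun hc => hx' ((hmem W x).mp hc)⟩
  exact Subrelation.wf hmono (InvImage.wf f h)

lemma artinian_of_killed_by_maximal {A : Type*} [CommRing A] {m : Ideal A} (hm : m.IsMaximal)
    (V : Type*) [AddCommGroup V] [Module A V] [Module.Finite A V]
    (h : m • (⊤ : Submodule A V) = ⊥) : IsArtinian A V := by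
  have htor : Module.IsTorsionBySet A V (m : Set A) := by
    intro v a
    have hmem : (a : A) • v ∈ m • (⊤ : Submodule A V) := Submodule.smul_mem_smul a.2 trivial
    rw [h] at hmem
    simpa using hmem
  letI := htor.module
  haveI : IsScalarTower A (A ⧸ m) V := htor.isScalarTower
  haveI hfin : Module.Finite (A ⧸ m) V := Module.Finite.of_restrictScalars_finite A (A ⧸ m) V
  letI : Field (A ⧸ m) := Ideal.Quotient.field m
  haveI hart : IsArtinian (A ⧸ m) V := inferInstance
  refine isArtinian_of_surj_scalars (S := A ⧸ m) ?_ hart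
  rw [Ideal.Quotient.algebraMap_eq]
  exact Ideal.Quotient.mk_surjective

lemma artinian_of_killed_by_pow_maximal {A : Type*} [CommRing A] [IsNoetherianRing A]
    {m : Ideal A} (hm : m.IsMaximal) : ∀ (k : ℕ) (V : Type*) [AddCommGroup V] [Module A V]
    [Module.Finite A V], m ^ k • (⊤ : Submodule A V) = ⊥ → IsArtinian A V := by
  intro k
  induction k with
  | zero =>
    intro V _ _ _ h
    rw [pow_zero, Ideal.one_eq_top, Submodule.top_smul] at h
    haveI : Subsingleton V := by
      refine ⟨fun a b => ?_⟩
      have ha : a ∈ (⊥ : Submodule A V) := by rw [← h]; trivial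
      have hb : b ∈ (⊥ : Submodule A V) := by rw [← h]; trivial
      rw [Submodule.mem_bot] at ha hb
      rw [ha, hb]
    exact isArtinian_of_finite
  | succ k ih =>
    intro V _ _ _ h
    set N : Submodule A V := m • ⊤ with hN
    haveI : IsNoetherian A V := isNoetherian_of_isNoetherianRing_of_finite A V
    haveI : Module.Finite A N := Module.Finite.iff_fg.mpr (IsNoetherian.noetherian N)
    have hNkill : m ^ k • (⊤ : Submodule A N) = ⊥ := by
      have hmap : Submodule.map N.subtype (m ^ k • (⊤ : Submodule A N)) = ⊥ := by
        rw [Submodule.map_smul'', Submodule.map_top, Submodule.range_subtype, hN,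
          ← mul_smul, ← pow_succ, h]
      exact (Submodule.map_injective_of_injective N.injective_subtype) (by simpa using hmap)
    haveI hart1 : IsArtinian A N := ih N hNkill
    haveI hart2 : IsArtinian A (V ⧸ N) := by
      refine artinian_of_killed_by_maximal hm _ ?_
      rw [eq_bot_iff]
      refine Submodule.smul_le.mpr ?_
      rintro a ha x -
      obtain ⟨y, rfl⟩ := N.mkQ_surjective x
      have hsm : a • N.mkQ y = N.mkQ (a • y) := (N.mkQ.map_smul a y).symm
      rw [Submodule.mem_bot, hsm, Submodule.mkQ_apply, Submodule.Quotient.mk_eq_zero]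
      exact Submodule.smul_mem_smul ha trivial
    exact (isArtinian_iff_submodule_quotient N).mpr ⟨hart1, hart2⟩

end Artinian

lemma pit_local {A : Type*} [CommRing A] [IsNoetherianRing A] [IsLocalRing A] (X : A)
    (hmin : maximalIdeal A ∈ (Ideal.span {X}).minimalPrimes)
    {Q Q' : Ideal A} (hQ : Q.IsPrime) (hQ' : Q'.IsPrime) (h1 : Q' < Q)
    (h2 : Q < maximalIdeal A) : False := by
  haveI := hQ
  set m := maximalIdeal A with hm
  -- every prime containing span {X} is m
  have huniq : ∀ P : Ideal A, P.IsPrime → Ideal.span {X} ≤ P → P = m := by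
    intro P hP hle
    have hPm : P ≤ m := le_maximalIdeal hP.ne_top
    exact le_antisymm hPm (hmin.2 ⟨hP, hle⟩ hPm)
  -- the radical of span {X} is m
  have hrad : (Ideal.span {X}).radical = m := by
    rw [Ideal.radical_eq_sInf]
    apply le_antisymm
    · exact sInf_le ⟨hmin.1.2, (maximalIdeal.isMaximal A).isPrime⟩
    · exact le_sInf fun J ⟨hJle, hJp⟩ => (huniq J hJp hJle).ge
  obtain ⟨k, hk⟩ : ∃ k, m ^ k ≤ Ideal.span {X} :=
    Ideal.exists_pow_le_of_le_radical_of_fg (hrad.ge) (IsNoetherian.noetherian m)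
  -- X is not in Q
  have hXQ : X ∉ Q := by
    intro hX
    have : Q = m := huniq Q hQ ((Ideal.span_singleton_le_iff_mem Q).mpr hX)
    exact h2.ne this
  -- localization at Q
  set B := Localization.AtPrime Q with hB
  letI φ := algebraMap A B
  haveI hBnoeth : IsNoetherianRing B := IsLocalization.isNoetherianRing Q.primeCompl B ‹_›
  set QB := Q.map φ with hQB
  have hQBprime : QB.IsPrime :=
    IsLocalization.isPrime_of_isPrime_disjoint Q.primeCompl B Q hQ disjoint_compl_left
  -- symbolic powers
  set Sym : ℕ → Ideal A := fun n => (QB ^ n).comap φ with hSym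
  have hdesc : ∀ n, Sym (n + 1) ≤ Sym n := by
    intro n
    exact Ideal.comap_mono (Ideal.pow_le_pow_right (Nat.le_succ n))
  have hmul : ∀ (b : A) (n : ℕ), b * X ∈ Sym n → b ∈ Sym n := by
    intro b n hb
    obtain ⟨u, hu⟩ := IsLocalization.map_units B (⟨X, hXQ⟩ : Q.primeCompl)
    have h1' : φ b * φ X ∈ QB ^ n := by
      have hmm : φ (b * X) ∈ QB ^ n := hb
      rwa [RingHom.map_mul] at hmm
    have h2' : φ b * φ X * ↑u⁻¹ ∈ QB ^ n := (QB ^ n).mul_mem_right _ h1'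
    rw [mul_assoc, ← hu, Units.mul_inv, mul_one] at h2'
    exact h2'
  -- the quotient A ⧸ span {X} is Artinian
  set J : Ideal A := Ideal.span {X} with hJdef
  have hJm : J ≤ m := hmin.1.2
  set V := A ⧸ J with hV
  haveI : IsArtinian A V := by
    refine artinian_of_killed_by_pow_maximal (maximalIdeal.isMaximal A) k V ?_
    rw [eq_bot_iff]
    refine Submodule.smul_le.mpr ?_
    rintro a ha x -
    obtain ⟨y, rfl⟩ := J.mkQ_surjective x
    have hsm : a • J.mkQ y = J.mkQ (a • y) := (J.mkQ.map_smul a y).symm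
    rw [Submodule.mem_bot, hsm, Submodule.mkQ_apply, Submodule.Quotient.mk_eq_zero]
    exact hk (Ideal.mul_mem_right y _ ha)
  -- the images of Sym n ⊔ J stabilize
  have hgmono : ∀ ⦃n n' : ℕ⦄, n ≤ n' →
      Submodule.map J.mkQ (Sym n' ⊔ J) ≤ Submodule.map J.mkQ (Sym n ⊔ J) := by
    intro n n' hnn
    refine Submodule.map_mono (sup_le_sup_right ?_ J)
    exact Ideal.comap_mono (Ideal.pow_le_pow_right hnn)
  obtain ⟨n, hn⟩ := IsArtinian.monotone_stabilizes
    (⟨fun n => Submodule.map J.mkQ (Sym n ⊔ J), fun _ _ h => hgmono h⟩ : ℕ →o (Submodule A V)ᵒᵈ)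
  have hstab : Sym n ⊔ J = Sym (n + 1) ⊔ J := by
    have h0 := hn (n + 1) (Nat.le_succ n)
    have h0' : Submodule.map J.mkQ (Sym n ⊔ J) = Submodule.map J.mkQ (Sym (n + 1) ⊔ J) := h0
    have hcm := congrArg (Submodule.comap J.mkQ) h0'
    simpa only [Submodule.comap_map_eq, Submodule.ker_mkQ, sup_assoc, sup_idem] using hcm
  -- Nakayama step 1 : Sym n = Sym (n+1)
  have hSymEq : Sym n = Sym (n + 1) := by
    refine le_antisymm ?_ (hdesc n)
    have hjac : J ≤ Ideal.jacobson ⊥ := by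
      rw [IsLocalRing.jacobson_eq_maximalIdeal ⊥ bot_ne_top]
      exact hJm
    refine Submodule.le_of_le_smul_of_le_jacobson_bot (I := J) (N := Sym (n + 1))
      (IsNoetherian.noetherian (Sym n)) hjac ?_
    intro u hu
    have hu' : u ∈ Sym (n + 1) ⊔ J := by rw [← hstab]; exact Submodule.mem_sup_left hu
    obtain ⟨a, ha, b, hb, rfl⟩ := Submodule.mem_sup.mp hu'
    obtain ⟨c, rfl⟩ := Ideal.mem_span_singleton'.mp hb
    have hcX : c * X ∈ Sym n := by
      have : (a + c * X) - a ∈ Sym n := Submodule.sub_mem _ hu (hdesc n ha)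
      simpa using this
    have hc : c ∈ Sym n := hmul c n hcX
    refine Submodule.add_mem_sup ha ?_
    have : X • c ∈ J • Sym n := Submodule.smul_mem_smul (Ideal.mem_span_singleton_self X) hc
    simpa [smul_eq_mul, mul_comm] using this
  -- push to the localization : QB ^ n = QB ^ (n + 1)
  have hpow : QB ^ n = QB ^ (n + 1) := by
    rw [← IsLocalization.map_comap Q.primeCompl B (QB ^ n),
      ← IsLocalization.map_comap Q.primeCompl B (QB ^ (n + 1))]
    exact congrArg (Ideal.map φ) hSymEq
  -- Nakayama step 2 : QB ^ n = ⊥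
  have hbot : QB ^ n = ⊥ := by
    refine Submodule.eq_bot_of_le_smul_of_le_jacobson_bot QB (QB ^ n)
      (IsNoetherian.noetherian _) ?_ ?_
    · rw [smul_eq_mul, ← pow_succ']
      exact hpow.le
    · rw [IsLocalRing.jacobson_eq_maximalIdeal ⊥ bot_ne_top]
      exact le_maximalIdeal hQBprime.ne_top
  -- transfer Q' to B
  have hdisj' : Disjoint (Q.primeCompl : Set A) (Q' : Set A) := by
    rw [Set.disjoint_left]
    intro a ha ha'
    exact ha (h1.le ha')
  have hQ'Bprime : (Q'.map φ).IsPrime :=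
    IsLocalization.isPrime_of_isPrime_disjoint Q.primeCompl B Q' hQ' hdisj'
  have hQBle : QB ≤ Q'.map φ := by
    intro a haQB
    refine hQ'Bprime.mem_of_pow_mem n ?_
    have : a ^ n ∈ QB ^ n := Ideal.pow_mem_pow haQB n
    rw [hbot] at this
    simp only [Submodule.mem_bot] at this
    rw [this]
    exact (Q'.map φ).zero_mem
  have hQle : Q ≤ Q' := by
    have hc1 : (QB).comap φ = Q :=
      IsLocalization.comap_map_of_isPrime_disjoint Q.primeCompl B hQ disjoint_compl_left
    have hc2 : (Q'.map φ).comap φ = Q' :=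
      IsLocalization.comap_map_of_isPrime_disjoint Q.primeCompl B hQ' hdisj'
    rw [← hc1, ← hc2]
    exact Ideal.comap_mono hQBle
  exact h1.not_ge hQle

/-- Krull's principal ideal theorem (chain form): if `p` is minimal over a principal ideal,
there is no chain `r < q < p` of primes. -/
lemma pit {R : Type*} [CommRing R] [IsNoetherianRing R] (x : R) {p q r : Ideal R}
    (hp : p ∈ (Ideal.span {x}).minimalPrimes) (hq : q.IsPrime) (hr : r.IsPrime)
    (hrq : r < q) (hqp : q < p) : False := by
  haveI hpp : p.IsPrime := hp.1.1
  set A := Localization.AtPrime p with hA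
  set φ := algebraMap R A with hφ
  haveI : IsNoetherianRing A := IsLocalization.isNoetherianRing p.primeCompl A ‹_›
  have hmax : Ideal.map φ p = maximalIdeal A := Localization.AtPrime.map_eq_maximalIdeal
  have hcomax : Ideal.comap φ (maximalIdeal A) = p := Localization.AtPrime.comap_maximalIdeal
  -- disjointness facts
  have hdisj : ∀ {I : Ideal R}, I ≤ p → Disjoint (p.primeCompl : Set R) (I : Set R) := by
    intro I hIp
    rw [Set.disjoint_left]
    intro a ha ha'
    exact ha (hIp ha')
  have hqA : (q.map φ).IsPrime :=
    IsLocalization.isPrime_of_isPrime_disjoint p.primeCompl A q hq (hdisj hqp.le)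
  have hrA : (r.map φ).IsPrime :=
    IsLocalization.isPrime_of_isPrime_disjoint p.primeCompl A r hr (hdisj (hrq.trans hqp).le)
  have hcq : Ideal.comap φ (q.map φ) = q :=
    IsLocalization.comap_map_of_isPrime_disjoint p.primeCompl A hq (hdisj hqp.le)
  have hcr : Ideal.comap φ (r.map φ) = r :=
    IsLocalization.comap_map_of_isPrime_disjoint p.primeCompl A hr (hdisj (hrq.trans hqp).le)
  -- minimality over the image of x
  have hminA : maximalIdeal A ∈ (Ideal.span {φ x}).minimalPrimes := by
    constructor
    · refine ⟨(maximalIdeal.isMaximal A).isPrime, ?_⟩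
      rw [Ideal.span_singleton_le_iff_mem, ← hmax]
      exact Ideal.mem_map_of_mem φ (hp.1.2 (Ideal.mem_span_singleton_self x))
    · rintro P' ⟨hP'p, hP'le⟩ hP'lem
      have hp' : (Ideal.comap φ P').IsPrime := hP'p.comap φ
      have hxp' : x ∈ Ideal.comap φ P' := hP'le (Ideal.mem_span_singleton_self (φ x))
      have hle : Ideal.comap φ P' ≤ p :=
        le_trans (Ideal.comap_mono hP'lem) hcomax.le
      have : p ≤ Ideal.comap φ P' :=
        hp.2 ⟨hp', (Ideal.span_singleton_le_iff_mem _).mpr hxp'⟩ hle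
      have hpeq : Ideal.comap φ P' = p := le_antisymm hle this
      calc maximalIdeal A = Ideal.map φ p := hmax.symm
        _ = Ideal.map φ (Ideal.comap φ P') := by rw [hpeq]
        _ ≤ P' := Ideal.map_comap_le
  -- strict inclusions upstairs
  have h1 : r.map φ < q.map φ := by
    refine lt_of_le_of_ne (Ideal.map_mono hrq.le) fun hcon => hrq.ne ?_
    rw [← hcr, hcon, hcq]
  have h2 : q.map φ < maximalIdeal A := by
    rw [← hmax]
    refine lt_of_le_of_ne (Ideal.map_mono hqp.le) fun hcon => hqp.ne ?_
    rw [← hcq, hcon, hmax, hcomax]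
  exact pit_local (φ x) hminA hqA hrA h1 h2

/-- Chain modification: given primes `r < q < p` and `x ∈ p`, there is a prime `q'`
containing `x` with `r < q' < p`. -/
lemma chain_insert {R : Type*} [CommRing R] [IsNoetherianRing R] {p q r : Ideal R}
    (hp : p.IsPrime) (hq : q.IsPrime) (hr : r.IsPrime) (hrq : r < q) (hqp : q < p)
    (x : R) (hx : x ∈ p) : ∃ q' : Ideal R, q'.IsPrime ∧ x ∈ q' ∧ r < q' ∧ q' < p := by
  by_cases hxr : x ∈ r
  · exact ⟨q, hq, hrq.le hxr, hrq, hqp⟩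
  haveI := hp
  have hSle : r ⊔ Ideal.span {x} ≤ p :=
    sup_le (hrq.le.trans hqp.le) ((Ideal.span_singleton_le_iff_mem p).mpr hx)
  obtain ⟨q', hq'min, hq'p⟩ := Ideal.exists_minimalPrimes_le hSle
  have hq'prime : q'.IsPrime := hq'min.1.1
  have hxq' : x ∈ q' := hq'min.1.2 (Ideal.mem_sup_right (Ideal.mem_span_singleton_self x))
  have hrq' : r < q' :=
    lt_of_le_of_ne (le_sup_left.trans hq'min.1.2) (fun h => hxr (h ▸ hxq'))
  refine ⟨q', hq'prime, hxq', hrq', lt_of_le_of_ne hq'p ?_⟩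
  intro heq
  rw [heq] at hq'min
  -- now `p` is minimal over `r ⊔ span {x}`; pass to `R ⧸ r` and contradict the PIT
  have hf : Function.Surjective (Ideal.Quotient.mk r) := Ideal.Quotient.mk_surjective
  set f := Ideal.Quotient.mk r with hfdef
  haveI := hr
  haveI := hq
  have hker : RingHom.ker f = r := Ideal.mk_ker
  have hbot : (⊥ : Ideal (R ⧸ r)).IsPrime := Ideal.bot_prime
  have hqbar : (q.map f).IsPrime :=
    Ideal.map_isPrime_of_surjective hf (by rw [hker]; exact hrq.le)
  have hpbar : (p.map f).IsPrime :=
    Ideal.map_isPrime_of_surjective hf (by rw [hker]; exact (hrq.trans hqp).le)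
  have hcmq : Ideal.comap f (q.map f) = q := by
    rw [Ideal.comap_map_of_surjective f hf, ← RingHom.ker_eq_comap_bot, hker,
      sup_eq_left.mpr hrq.le]
  have hcmp : Ideal.comap f (p.map f) = p := by
    rw [Ideal.comap_map_of_surjective f hf, ← RingHom.ker_eq_comap_bot, hker,
      sup_eq_left.mpr (hrq.trans hqp).le]
  have hmin' : p.map f ∈ (Ideal.span {f x}).minimalPrimes := by
    constructor
    · exact ⟨hpbar, (Ideal.span_singleton_le_iff_mem _).mpr
        (Ideal.mem_map_of_mem f ((le_sup_right.trans hq'min.1.2)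
          (Ideal.mem_span_singleton_self x)))⟩
    · rintro T ⟨hTp, hTle⟩ hTlep
      haveI := hTp
      have ht : (Ideal.comap f T).IsPrime := Ideal.IsPrime.comap f
      have hrt : r ≤ Ideal.comap f T := by
        intro z hz
        have hz0 : f z = 0 := Ideal.Quotient.eq_zero_iff_mem.mpr hz
        rw [Ideal.mem_comap, hz0]
        exact T.zero_mem
      have hxt : x ∈ Ideal.comap f T := hTle (Ideal.mem_span_singleton_self (f x))
      have hle2 : Ideal.comap f T ≤ p := le_trans (Ideal.comap_mono hTlep) hcmp.le
      have hple : p ≤ Ideal.comap f T :=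
        hq'min.2 ⟨ht, sup_le hrt ((Ideal.span_singleton_le_iff_mem _).mpr hxt)⟩ hle2
      calc p.map f ≤ (Ideal.comap f T).map f := Ideal.map_mono hple
        _ = T := Ideal.map_comap_of_surjective f hf T
  have hbotlt : (⊥ : Ideal (R ⧸ r)) < q.map f := by
    obtain ⟨y, hyq, hyr⟩ := SetLike.exists_of_lt hrq
    refine Ne.bot_lt fun hcon => ?_
    have : f y ∈ q.map f := Ideal.mem_map_of_mem f hyq
    rw [hcon] at this
    rw [Submodule.mem_bot] at this
    exact hyr ((Ideal.Quotient.eq_zero_iff_mem).mp this)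
  have hqplt : q.map f < p.map f := by
    refine lt_of_le_of_ne (Ideal.map_mono hqp.le) fun hcon => hqp.ne ?_
    rw [← hcmq, hcon, hcmp]
  exact pit (f x) hmin' hqbar hbot hbotlt hqplt

lemma chain_mono {β : Type*} [Preorder β] (c : ℕ → β) (m : ℕ)
    (h : ∀ i < m, c (i + 1) < c i) : ∀ i j, i ≤ j → j ≤ m → c j ≤ c i := by
  intro i j hij hjm
  induction j, hij using Nat.le_induction with
  | base => exact le_rfl
  | succ n hn ih => exact le_trans (h n (by omega)).le (ih (by omega))

/-- Bubbling: from a strictly descending chain of primes of length `m ≥ 1` starting at `c 0`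
with `x ∈ c (m - 1 - j)`, produce a chain of length `m - 1` starting at `c 0` whose last
member contains `x`. -/
lemma bubble {R : Type*} [CommRing R] [IsNoetherianRing R] (x : R) :
    ∀ (j m : ℕ) (c : ℕ → Ideal R), 1 ≤ m → (∀ i ≤ m, (c i).IsPrime) →
      (∀ i < m, c (i + 1) < c i) → x ∈ c (m - 1 - j) →
      ∃ d : ℕ → Ideal R, (∀ i ≤ m - 1, (d i).IsPrime) ∧ (∀ i < m - 1, d (i + 1) < d i) ∧
        d 0 = c 0 ∧ x ∈ d (m - 1) := by
  intro j
  induction j with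
  | zero =>
    intro m c hm hcp hdesc hx
    exact ⟨c, fun i hi => hcp i (by omega), fun i hi => hdesc i (by omega), rfl, hx⟩
  | succ j ih =>
    intro m c hm hcp hdesc hx
    by_cases hcase : m - 1 - (j + 1) = m - 1 - j
    · exact ih m c hm hcp hdesc (hcase ▸ hx)
    set i := m - 1 - (j + 1) with hi
    have hi1 : i + 1 = m - 1 - j := by omega
    have hi2 : i + 2 ≤ m := by omega
    obtain ⟨q', hq'p, hxq', hlt1, hlt2⟩ := chain_insert (hcp i (by omega))
      (hcp (i + 1) (by omega)) (hcp (i + 2) (by omega))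
      (hdesc (i + 1) (by omega)) (hdesc i (by omega)) x hx
    set c' : ℕ → Ideal R := fun t => if t = i + 1 then q' else c t with hc'
    have hc'p : ∀ t ≤ m, (c' t).IsPrime := by
      intro t ht
      by_cases h : t = i + 1
      · simpa [hc', h] using hq'p
      · simpa [hc', h] using hcp t ht
    have hc'desc : ∀ t < m, c' (t + 1) < c' t := by
      intro t ht
      rcases eq_or_ne t (i + 1) with h | h
      · have e1 : c' (t + 1) = c (t + 1) := by
          have hne : t + 1 ≠ i + 1 := by omega
          simp [hc', hne, show t ≠ i by omega]
        have e2 : c' t = q' := by simp [hc', h]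
        rw [e1, e2, h]
        exact hlt1
      · rcases eq_or_ne t i with h' | h'
        · have e1 : c' (t + 1) = q' := by simp [hc', h']
          have e2 : c' t = c t := by simp [hc', h]
          rw [e1, e2, h']
          exact hlt2
        · have e1 : c' (t + 1) = c (t + 1) := by
            have : t + 1 ≠ i + 1 := by omega
            simp [hc', this, h']
          have e2 : c' t = c t := by simp [hc', h]
          rw [e1, e2]
          exact hdesc t ht
    have hx' : x ∈ c' (m - 1 - j) := by
      rw [← hi1]
      simpa [hc'] using hxq'
    obtain ⟨d, h1, h2, h3, h4⟩ := ih m c' hm hc'p hc'desc hx'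
    refine ⟨d, h1, h2, ?_, h4⟩
    rw [h3]
    have : (0 : ℕ) ≠ i + 1 := by omega
    simp [hc', this]

/-- Krull's height theorem: a prime minimal over an ideal generated by `n` elements
admits no strictly descending chain of primes of length `n + 1` below it. -/
lemma ht_aux (n : ℕ) : ∀ {R : Type u} [CommRing R] [IsNoetherianRing R] (s : Finset R),
    s.card ≤ n → ∀ p : Ideal R, p ∈ (Ideal.span (s : Set R)).minimalPrimes →
    ∀ c : ℕ → Ideal R, (∀ i ≤ n + 1, (c i).IsPrime) → (∀ i < n + 1, c (i + 1) < c i) →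
    c 0 = p → False := by
  induction n with
  | zero =>
    intro R _ _ s hs p hp c hcp hdesc h0
    have hsempty : s = ∅ := Finset.card_eq_zero.mp (Nat.le_zero.mp hs)
    rw [hsempty] at hp
    simp only [Finset.coe_empty, Ideal.span_empty] at hp
    have h1 : c 1 < p := h0 ▸ hdesc 0 (by omega)
    exact h1.not_ge (hp.2 ⟨hcp 1 (by omega), bot_le⟩ h1.le)
  | succ n ih =>
    intro R _ _ s hs p hp c hcp hdesc h0
    classical
    rcases Finset.eq_empty_or_nonempty s with hsempty | ⟨x, hxs⟩
    · rw [hsempty] at hp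
      simp only [Finset.coe_empty, Ideal.span_empty] at hp
      have h1 : c 1 < p := h0 ▸ hdesc 0 (by omega)
      exact h1.not_ge (hp.2 ⟨hcp 1 (by omega), bot_le⟩ h1.le)
    -- x ∈ p ; bubble x down to the end of the chain of length n + 2
    have hxp : x ∈ p := hp.1.2 (Ideal.subset_span (by exact_mod_cast hxs))
    have hx0 : x ∈ c ((n + 2) - 1 - (n + 1)) := by
      have : (n + 2) - 1 - (n + 1) = 0 := by omega
      rw [this, h0]
      exact hxp
    obtain ⟨d, hdp, hddesc, hd0, hdx⟩ := bubble x (n + 1) (n + 2) c (by omega)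
      (fun i hi => hcp i (by omega)) (fun i hi => hdesc i (by omega)) hx0
    have hred : n + 2 - 1 = n + 1 := rfl
    rw [hred] at hdp hddesc hdx
    have hd0p : d 0 = p := hd0.trans h0
    -- quotient by r := d (n + 1)
    set r := d (n + 1) with hrdef
    have hrp : r.IsPrime := hdp (n + 1) le_rfl
    haveI := hrp
    have hrle : ∀ i ≤ n + 1, r ≤ d i := fun i hi =>
      chain_mono d (n + 1) hddesc i (n + 1) hi le_rfl
    set f := Ideal.Quotient.mk r with hfdef
    have hf : Function.Surjective f := Ideal.Quotient.mk_surjective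
    have hker : RingHom.ker f = r := Ideal.mk_ker
    have hcomapmap : ∀ (I : Ideal R), r ≤ I → Ideal.comap f (I.map f) = I := by
      intro I hI
      rw [Ideal.comap_map_of_surjective f hf, ← RingHom.ker_eq_comap_bot, hker,
        sup_eq_left.mpr hI]
    -- the new generating set
    set sbar : Finset (R ⧸ r) := (s.erase x).image f with hsbar
    have hsbarcard : sbar.card ≤ n := by
      calc sbar.card ≤ (s.erase x).card := Finset.card_image_le
        _ = s.card - 1 := Finset.card_erase_of_mem hxs
        _ ≤ n := by omega
    -- p maps to a prime minimal over span sbar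
    have hxr : x ∈ r := hdx
    haveI := hp.1.1
    have hpbar : (p.map f).IsPrime := Ideal.map_isPrime_of_surjective hf
      (by rw [hker]; exact (hd0p ▸ hrle 0 (by omega)))
    have hminbar : p.map f ∈ (Ideal.span (sbar : Set (R ⧸ r))).minimalPrimes := by
      constructor
      · refine ⟨hpbar, Ideal.span_le.mpr ?_⟩
        rintro y hy
        simp only [hsbar, Finset.coe_image, Set.mem_image, Finset.mem_coe] at hy
        obtain ⟨z, hz, rfl⟩ := hy
        exact Ideal.mem_map_of_mem f (hp.1.2 (Ideal.subset_span (Finset.mem_erase.mp hz).2))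
      · rintro T ⟨hTp, hTle⟩ hTlep
        haveI := hTp
        have hrt : r ≤ Ideal.comap f T := by
          intro z hz
          have hz0 : f z = 0 := Ideal.Quotient.eq_zero_iff_mem.mpr hz
          rw [Ideal.mem_comap, hz0]
          exact T.zero_mem
        have hst : Ideal.span (s : Set R) ≤ Ideal.comap f T := by
          rw [Ideal.span_le]
          intro z hz
          rcases eq_or_ne z x with rfl | hzx
          · exact hrt hxr
          · have : f z ∈ Ideal.span (sbar : Set (R ⧸ r)) := by
              refine Ideal.subset_span ?_
              simp only [hsbar, Finset.coe_image, Set.mem_image, Finset.mem_coe]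
              exact ⟨z, Finset.mem_erase.mpr ⟨hzx, hz⟩, rfl⟩
            exact hTle this
        have hle2 : Ideal.comap f T ≤ p := le_trans (Ideal.comap_mono hTlep)
          (hcomapmap p (hd0p ▸ hrle 0 (by omega))).le
        have hple : p ≤ Ideal.comap f T := hp.2 ⟨Ideal.IsPrime.comap f, hst⟩ hle2
        calc p.map f ≤ (Ideal.comap f T).map f := Ideal.map_mono hple
          _ = T := Ideal.map_comap_of_surjective f hf T
    -- the quotient chain
    set cbar : ℕ → Ideal (R ⧸ r) := fun i => (d i).map f with hcbar
    have hcbarp : ∀ i ≤ n + 1, (cbar i).IsPrime := by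
      intro i hi
      haveI := hdp i hi
      exact Ideal.map_isPrime_of_surjective hf (by rw [hker]; exact hrle i hi)
    have hcbardesc : ∀ i < n + 1, cbar (i + 1) < cbar i := by
      intro i hi
      refine lt_of_le_of_ne (Ideal.map_mono (hddesc i hi).le) fun hcon => (hddesc i hi).ne ?_
      have hcon' : (d (i + 1)).map f = (d i).map f := hcon
      rw [← hcomapmap (d (i + 1)) (hrle (i + 1) (by omega)), hcon',
        hcomapmap (d i) (hrle i (by omega))]
    exact ih sbar hsbarcard (p.map f) hminbar cbar hcbarp hcbardesc (by rw [← hd0p])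

lemma primeSpectrum_wf_lt {R : Type u} [CommRing R] [IsNoetherianRing R] :
    WellFounded ((· < ·) : PrimeSpectrum R → PrimeSpectrum R → Prop) := by
  rw [RelEmbedding.wellFounded_iff_isEmpty]
  constructor
  rintro emb
  set c : ℕ → Ideal R := fun i => (emb i).asIdeal with hc
  have hdesc : ∀ i : ℕ, c (i + 1) < c i := fun i =>
    (PrimeSpectrum.asIdeal_lt_asIdeal _ _).mpr (emb.map_rel_iff.mpr (Nat.lt_succ_self i))
  obtain ⟨s, hs⟩ := (IsNoetherian.noetherian (c 0)) -- c 0 is finitely generated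
  have hs' : Ideal.span (s : Set R) = c 0 := hs
  have hp : c 0 ∈ (Ideal.span (s : Set R)).minimalPrimes := by
    rw [hs']
    exact ⟨⟨(emb 0).isPrime, le_rfl⟩, fun y hy hle => hy.2⟩
  exact ht_aux s.card s le_rfl (c 0) hp c (fun i _ => (emb i).isPrime)
    (fun i _ => hdesc i) rfl

lemma primeSpectrum_wf_gt {R : Type u} [CommRing R] [IsNoetherianRing R] :
    WellFounded ((· > ·) : PrimeSpectrum R → PrimeSpectrum R → Prop) := by
  have hwf : WellFounded ((· > ·) : Ideal R → Ideal R → Prop) :=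
    (isNoetherian_iff' (R := R) (M := R)).mp ‹_› |>.wf
  have := InvImage.wf (fun p : PrimeSpectrum R => p.asIdeal) hwf
  exact Subrelation.wf (fun {x y} hxy => (PrimeSpectrum.asIdeal_lt_asIdeal _ _).mpr hxy) this

lemma exists_antichain {α : Type*} [PartialOrder α] [Infinite α]
    (hlt : WellFounded ((· < ·) : α → α → Prop))
    (hgt : WellFounded ((· > ·) : α → α → Prop)) :
    ∃ f : ℕ → α, Function.Injective f ∧ ∀ i j : ℕ, i ≠ j → ¬ f i ≤ f j := by
  by_cases hanti : ∃ S : Set α, S.Infinite ∧ IsAntichain (· ≤ ·) S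
  · obtain ⟨S, hSinf, hSanti⟩ := hanti
    let e := hSinf.natEmbedding
    refine ⟨fun n => (e n : α), fun a b hab => e.injective (Subtype.ext hab), ?_⟩
    intro i j hij hle
    have hne : (e i : α) ≠ (e j : α) := fun hcon => hij (e.injective (Subtype.ext hcon))
    exact hSanti (e i).2 (e j).2 hne hle
  -- otherwise we build an infinite ascending chain, contradicting `hgt`
  exfalso
  have step : ∀ S : Set α, S.Infinite → ∃ m ∈ S, {y ∈ S | m < y}.Infinite := by
    intro S hS
    set MinS := {z ∈ S | ∀ y ∈ S, ¬ y < z} with hMinS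
    have hanti' : IsAntichain (· ≤ ·) MinS := by
      intro a ha b hb hab hle
      exact hb.2 a ha.1 (lt_of_le_of_ne hle hab)
    have hMfin : MinS.Finite := by
      by_contra hinf
      exact hanti ⟨MinS, hinf, hanti'⟩
    have hcover : S ⊆ ⋃ m ∈ MinS, {x ∈ S | m ≤ x} := by
      intro x hx
      obtain ⟨m, hm, hmin⟩ := hlt.has_min {y ∈ S | y ≤ x} ⟨x, hx, le_rfl⟩
      have hmMin : m ∈ MinS := ⟨hm.1, fun y hy hylt => hmin y ⟨hy, hylt.le.trans hm.2⟩ hylt⟩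
      exact Set.mem_biUnion hmMin ⟨hx, hm.2⟩
    have hex : ∃ m ∈ MinS, {x ∈ S | m ≤ x}.Infinite := by
      by_contra hcon
      push_neg at hcon
      have hfin : (⋃ m ∈ MinS, {x ∈ S | m ≤ x}).Finite :=
        Set.Finite.biUnion hMfin fun m hm => hcon m hm
      exact hS (hfin.subset hcover)
    obtain ⟨m, hmMin, hminf⟩ := hex
    refine ⟨m, hmMin.1, ?_⟩
    have hsub : {x ∈ S | m ≤ x} \ {m} ⊆ {y ∈ S | m < y} := by
      rintro x ⟨⟨hxS, hmx⟩, hxm⟩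
      exact ⟨hxS, lt_of_le_of_ne hmx (Ne.symm hxm)⟩
    exact (hminf.diff (Set.finite_singleton m)).mono hsub
  -- iterate the step
  have stepT : ∀ t : {q : α × Set α // q.2.Infinite ∧ ∀ y ∈ q.2, q.1 < y},
      ∃ t' : {q : α × Set α // q.2.Infinite ∧ ∀ y ∈ q.2, q.1 < y}, t.1.1 < t'.1.1 := by
    rintro ⟨⟨a, S⟩, hS, hlt'⟩
    obtain ⟨m, hmS, hminf⟩ := step S hS
    exact ⟨⟨(m, {y ∈ S | m < y}), hminf, fun y hy => hy.2⟩, hlt' m hmS⟩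
  choose F hF using stepT
  obtain ⟨m0, _, hm0inf⟩ := step Set.univ Set.infinite_univ
  set t0 : {q : α × Set α // q.2.Infinite ∧ ∀ y ∈ q.2, q.1 < y} :=
    ⟨(m0, {y ∈ Set.univ | m0 < y}), hm0inf, fun y hy => hy.2⟩ with ht0
  set g : ℕ → {q : α × Set α // q.2.Infinite ∧ ∀ y ∈ q.2, q.1 < y} := fun n => F^[n] t0 with hg
  have hgsucc : ∀ n, (g n).1.1 < (g (n + 1)).1.1 := by
    intro n
    have : g (n + 1) = F (g n) := by
      rw [hg]
      exact Function.iterate_succ_apply' F n t0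
    rw [this]
    exact hF (g n)
  obtain ⟨b, ⟨k, hk⟩, hmax⟩ := hgt.has_min (Set.range fun n => (g n).1.1)
    ⟨(g 0).1.1, ⟨0, rfl⟩⟩
  exact hmax ((g (k + 1)).1.1) ⟨k + 1, rfl⟩ (hk ▸ hgsucc k)

/-- If a commutative noetherian ring has infinitely many prime ideals, then there is a
countably infinite family of prime ideals that are pairwise incomparable under inclusion. -/
theorem stmt_2 {R : Type*} [CommRing R] [IsNoetherianRing R]
    (h : Infinite (PrimeSpectrum R)) :
    ∃ f : ℕ → PrimeSpectrum R, Function.Injective f ∧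
      ∀ i j : ℕ, i ≠ j → ¬ (f i).asIdeal ≤ (f j).asIdeal := by
  haveI := h
  obtain ⟨f, hinj, hcmp⟩ := exists_antichain (α := PrimeSpectrum R) primeSpectrum_wf_lt primeSpectrum_wf_gt
  exact ⟨f, hinj, fun i j hij hle => hcmp i j hij ((PrimeSpectrum.asIdeal_le_asIdeal _ _).mp hle)⟩
end

section
/- Let R be a commutative noetherian ring, let F be a Zariski-closed subset of Spec R, and let W be a subset of F such that for all primes p ⊆ q with p, q ∈ F: if p ∈ W then q ∈ W, and if q ∈ W then p ∈ W. Then W is clopen (both open and closed) in the subspace topology on F. -/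
open TopologicalSpace

lemma aux_closed {α : Type*} [TopologicalSpace α] [NoetherianSpace α] [QuasiSober α]
    (S : Set α) (h1 : ∀ ⦃x y : α⦄, x ⤳ y → x ∈ S → y ∈ S)
    (h2 : ∀ ⦃x y : α⦄, x ⤳ y → y ∈ S → x ∈ S) : IsClosed S := by
  have key : S = ⋃ C ∈ {C ∈ irreducibleComponents α | (C ∩ S).Nonempty}, C := by
    ext y
    constructor
    · intro hy
      exact Set.mem_biUnion ⟨irreducibleComponent_mem_irreducibleComponents y,
        ⟨y, mem_irreducibleComponent, hy⟩⟩ mem_irreducibleComponent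
    · intro hy
      obtain ⟨C, ⟨hC, x, hxC, hxS⟩, hyC⟩ := Set.mem_iUnion₂.mp hy
      have hCc : IsClosed C := isClosed_of_mem_irreducibleComponents C hC
      have hCi : IsIrreducible C := hC.1
      have hgen : IsGenericPoint hCi.genericPoint C :=
        hCi.isGenericPoint_genericPoint hCc
      have hηx : hCi.genericPoint ⤳ x := hgen.specializes hxC
      have hηy : hCi.genericPoint ⤳ y := hgen.specializes hyC
      exact h1 hηy (h2 hηx hxS)
  rw [key]
  refine Set.Finite.isClosed_biUnion ?_ fun C hC =>
    isClosed_of_mem_irreducibleComponents C hC.1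
  exact NoetherianSpace.finite_irreducibleComponents.subset fun C hC => hC.1

/-- Let `R` be a commutative noetherian ring, `F` a Zariski-closed subset of `Spec R`, and
`W ⊆ F` a subset that is both specialization closed and generalization closed in `F`.
Then `W` is clopen in the subspace topology on `F`. -/
theorem stmt_5 {R : Type*} [CommRing R] [IsNoetherianRing R]
    (F : Set (PrimeSpectrum R)) (hF : IsClosed F)
    (W : Set (PrimeSpectrum R)) (hWF : W ⊆ F)
    (hspcl : ∀ p q : PrimeSpectrum R, p ∈ F → q ∈ F → p.asIdeal ≤ q.asIdeal →
      p ∈ W → q ∈ W)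
    (hgencl : ∀ p q : PrimeSpectrum R, p ∈ F → q ∈ F → p.asIdeal ≤ q.asIdeal →
      q ∈ W → p ∈ W) :
    IsClopen {x : F | (x : PrimeSpectrum R) ∈ W} := by
  haveI : QuasiSober F := (hF.isClosedEmbedding_subtypeVal).quasiSober
  set S : Set F := {x : F | (x : PrimeSpectrum R) ∈ W} with hS
  have hspec : ∀ ⦃x y : F⦄, x ⤳ y → ((x : PrimeSpectrum R).asIdeal ≤ (y : PrimeSpectrum R).asIdeal) := by
    intro x y hxy
    have : (x : PrimeSpectrum R) ⤳ (y : PrimeSpectrum R) := hxy.map continuous_subtype_val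
    exact (PrimeSpectrum.le_iff_specializes _ _).mpr this
  have h1 : ∀ ⦃x y : F⦄, x ⤳ y → x ∈ S → y ∈ S := fun x y hxy hx =>
    hspcl x y x.2 y.2 (hspec hxy) hx
  have h2 : ∀ ⦃x y : F⦄, x ⤳ y → y ∈ S → x ∈ S := fun x y hxy hy =>
    hgencl x y x.2 y.2 (hspec hxy) hy
  refine ⟨aux_closed S h1 h2, ?_⟩
  rw [← isClosed_compl_iff]
  exact aux_closed Sᶜ (fun x y hxy hx hy => hx (h2 hxy hy))
    (fun x y hxy hy hx => hy (h1 hxy hx))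
end

section
/- Let R be a commutative noetherian ring and let C be a finitely generated R-module. If C is indecomposable (nonzero and not isomorphic to a direct sum of two nonzero R-modules), then the support Supp C = { p ∈ Spec R : C_p ≠ 0 } is a connected subspace of Spec R. -/
/-- A space in which every clopen set is trivial is preconnected. -/
theorem aux_preconnected_of_clopen {X : Type*} [TopologicalSpace X]
    (h : ∀ s : Set X, IsClopen s → s = ∅ ∨ s = Set.univ) : PreconnectedSpace X := by
  constructor
  rw [isPreconnected_iff_subset_of_disjoint]
  intro u v hu hv hcov hdis
  have huv : u ∪ v = Set.univ := Set.univ_subset_iff.mp hcov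
  have hcompl : uᶜ = v := by
    apply Set.Subset.antisymm
    · intro x hx
      rcases (huv ▸ Set.mem_univ x : x ∈ u ∪ v) with h' | h'
      · exact absurd h' hx
      · exact h'
    · intro x hx hxu
      have : x ∈ Set.univ ∩ (u ∩ v) := ⟨trivial, hxu, hx⟩
      rw [hdis] at this
      exact this
  have hclopen : IsClopen u := ⟨by rw [← isOpen_compl_iff, hcompl]; exact hv, hu⟩
  rcases h u hclopen with rfl | rfl
  · right
    rw [← hcompl]; simp
  · left; exact fun x _ => trivial

/-- Over a commutative noetherian ring, the support of an indecomposable finitely generated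
module (nonzero and with no nontrivial direct sum decomposition) is a connected subspace of
`Spec R`. -/
theorem stmt_6 {R : Type*} [CommRing R] [IsNoetherianRing R]
    (C : Type*) [AddCommGroup C] [Module R C] [Module.Finite R C]
    (hC : Nontrivial C)
    (hindec : ∀ M N : Submodule R C, IsCompl M N → M = ⊥ ∨ N = ⊥) :
    IsConnected (Module.support R C) := by
  set I : Ideal R := Module.annihilator R C with hI
  -- The annihilator is a proper ideal since `C` is nontrivial.
  have hIne : I ≠ ⊤ := by
    intro h
    obtain ⟨c, c', hcc⟩ := hC
    apply hcc
    have h1 : (1 : R) ∈ I := h ▸ trivial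
    have := Module.mem_annihilator.mp h1
    rw [← one_smul R c, ← one_smul R c', this c, this c']
  haveI : Nontrivial (R ⧸ I) := Ideal.Quotient.nontrivial_iff.mpr hIne
  -- `Spec (R ⧸ I)` is preconnected: a clopen set comes from an idempotent, an idempotent
  -- gives a direct sum decomposition of `C`, which must be trivial.
  haveI : PreconnectedSpace (PrimeSpectrum (R ⧸ I)) := by
    apply aux_preconnected_of_clopen
    intro s hs
    obtain ⟨e, he, rfl⟩ := PrimeSpectrum.exists_idempotent_basicOpen_eq_of_isClopen hs
    obtain ⟨r, rfl⟩ := Ideal.Quotient.mk_surjective e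
    -- `r * r - r ∈ I`, so `(r*r) • c = r • c` for all `c`
    have hid : ∀ c : C, (r * r) • c = r • c := by
      intro c
      have hmem : (r * r - r : R) ∈ I := by
        rw [← Ideal.Quotient.eq_zero_iff_mem, map_sub, map_mul, he, sub_self]
      have h0 := Module.mem_annihilator.mp hmem c
      rw [sub_smul] at h0
      exact sub_eq_zero.mp h0
    -- the two submodules `rC` and `(1-r)C`
    set M : Submodule R C := LinearMap.range (LinearMap.lsmul R C r) with hM
    set N : Submodule R C := LinearMap.range (LinearMap.lsmul R C (1 - r)) with hN
    have hcompl : IsCompl M N := by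
      constructor
      · rw [disjoint_iff]
        ext x
        simp only [Submodule.mem_inf, Submodule.mem_bot]
        constructor
        · rintro ⟨⟨a, ha⟩, ⟨b, hb⟩⟩
          simp only [LinearMap.lsmul_apply] at ha hb
          have h1 : r • x = x := by
            rw [← ha, ← mul_smul, hid, ha]
          have h2 : r • x = 0 := by
            rw [← hb, ← mul_smul, mul_sub, mul_one, sub_smul, hid, sub_self]
          rw [← h1, h2]
        · rintro rfl
          exact ⟨⟨0, by simp⟩, ⟨0, by simp⟩⟩
      · rw [codisjoint_iff, eq_top_iff]
        intro x _
        have : x = r • x + (1 - r) • x := by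
          rw [sub_smul, one_smul]; abel
        rw [this]
        exact Submodule.add_mem_sup ⟨x, rfl⟩ ⟨x, rfl⟩
    rcases hindec M N hcompl with h0 | h0
    · -- `rC = 0`, so `r ∈ I`, so the idempotent is `0` and the basic open is empty
      left
      have hrI : r ∈ I := by
        rw [hI, Module.mem_annihilator]
        intro m
        have : (LinearMap.lsmul R C r) m ∈ M := ⟨m, rfl⟩
        rw [h0, Submodule.mem_bot] at this
        exact this
      have : Ideal.Quotient.mk I r = 0 := Ideal.Quotient.eq_zero_iff_mem.mpr hrI
      rw [this]
      simp [PrimeSpectrum.basicOpen_zero]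
    · -- `(1-r)C = 0`, so the idempotent is `1` and the basic open is everything
      right
      have hrI : (1 - r : R) ∈ I := by
        rw [hI, Module.mem_annihilator]
        intro m
        have : (LinearMap.lsmul R C (1 - r)) m ∈ N := ⟨m, rfl⟩
        rw [h0, Submodule.mem_bot] at this
        exact this
      have h1 : Ideal.Quotient.mk I r = 1 := by
        have : Ideal.Quotient.mk I (1 - r) = 0 := Ideal.Quotient.eq_zero_iff_mem.mpr hrI
        rw [map_sub, map_one, sub_eq_zero] at this
        exact this.symm
      rw [h1]
      simp
  haveI : ConnectedSpace (PrimeSpectrum (R ⧸ I)) := { toNonempty := inferInstance }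
  -- Transfer connectedness along the closed embedding `Spec (R ⧸ I) → Spec R`.
  have hrange : Set.range (PrimeSpectrum.comap (Ideal.Quotient.mk I)) =
      PrimeSpectrum.zeroLocus (I : Set R) := by
    rw [range_comap_of_surjective _ _ Ideal.Quotient.mk_surjective, Ideal.mk_ker]
  have hsupp : Module.support R C = PrimeSpectrum.zeroLocus (I : Set R) :=
    Module.support_eq_zeroLocus
  rw [hsupp, ← hrange]
  exact isConnected_range (PrimeSpectrum.continuous_comap (Ideal.Quotient.mk I))
end

section
/- Let R be a commutative noetherian ring, let I be an ideal of R, and let I₁, I₂ be radical ideals of R with I₁ + I₂ = R and I₁ ∩ I₂ = √I (the radical of I). Then there exist ideals J₁, J₂ of R such that J₁ + J₂ = R, J₁ ∩ J₂ = I, √J₁ = I₁, and √J₂ = I₂; in particular R/I ≅ R/J₁ × R/J₂. -/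
/-- Idempotent lifting for ideals: given an ideal `I` and radical ideals `I₁, I₂` with
`I₁ + I₂ = R` and `I₁ ∩ I₂ = √I`, there are ideals `J₁, J₂` with `J₁ + J₂ = R`,
`J₁ ∩ J₂ = I`, `√J₁ = I₁` and `√J₂ = I₂`; in particular `R/I ≅ R/J₁ × R/J₂`. -/
theorem stmt_8 {R : Type*} [CommRing R] [IsNoetherianRing R]
    (I I₁ I₂ : Ideal R) (h₁ : I₁.IsRadical) (h₂ : I₂.IsRadical)
    (hsum : I₁ ⊔ I₂ = ⊤) (hinf : I₁ ⊓ I₂ = I.radical) :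
    ∃ J₁ J₂ : Ideal R, J₁ ⊔ J₂ = ⊤ ∧ J₁ ⊓ J₂ = I ∧
      J₁.radical = I₁ ∧ J₂.radical = I₂ ∧
      Nonempty ((R ⧸ I) ≃+* (R ⧸ J₁) × (R ⧸ J₂)) := by
  obtain ⟨m, hm⟩ := Ideal.exists_radical_pow_le_of_fg I (IsNoetherian.noetherian _)
  set n := m + 1 with hn'
  have hn : I.radical ^ n ≤ I := (Ideal.pow_le_pow_right (Nat.le_succ m)).trans hm
  set J₁ := I ⊔ I₁ ^ n with hJ₁
  set J₂ := I ⊔ I₂ ^ n with hJ₂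
  have hI1 : I ≤ I₁ := Ideal.le_radical.trans (hinf ▸ inf_le_left)
  have hI2 : I ≤ I₂ := Ideal.le_radical.trans (hinf ▸ inf_le_right)
  have htop : J₁ ⊔ J₂ = ⊤ := by
    apply top_le_iff.mp
    calc (⊤ : Ideal R) = I₁ ^ n ⊔ I₂ ^ n := (Ideal.pow_sup_pow_eq_top hsum).symm
      _ ≤ J₁ ⊔ J₂ := sup_le_sup le_sup_right le_sup_right
  have hcop : IsCoprime J₁ J₂ := (Ideal.isCoprime_iff_sup_eq).mpr htop
  have hJI : J₁ ⊓ J₂ = I := by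
    apply le_antisymm
    · calc J₁ ⊓ J₂ = J₁ * J₂ := Ideal.inf_eq_mul_of_isCoprime hcop
        _ = (I ⊔ I₁ ^ n) * (I ⊔ I₂ ^ n) := rfl
        _ ≤ I ⊔ I₁ ^ n * I₂ ^ n := by
            rw [Ideal.sup_mul, Ideal.mul_sup, Ideal.mul_sup]
            refine sup_le (sup_le ?_ ?_) (sup_le ?_ ?_)
            · exact le_sup_of_le_left Ideal.mul_le_right
            · exact le_sup_of_le_left Ideal.mul_le_left
            · exact le_sup_of_le_left Ideal.mul_le_right
            · exact le_sup_right
        _ ≤ I ⊔ (I₁ ⊓ I₂) ^ n := by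
            refine sup_le le_sup_left (le_sup_of_le_right ?_)
            rw [← mul_pow]
            exact Ideal.pow_right_mono Ideal.mul_le_inf n
        _ ≤ I := sup_le le_rfl (hinf ▸ hn)
    · exact le_inf le_sup_left le_sup_left
  have hr₁ : J₁.radical = I₁ := by
    apply le_antisymm
    · rw [← h₁.radical]
      exact Ideal.radical_mono (sup_le hI1 (Ideal.pow_le_self (Nat.succ_ne_zero m)))
    · refine le_trans ?_ (Ideal.radical_mono (le_sup_right (a := I) (b := I₁ ^ n)))
      rw [hn', Ideal.radical_pow _ (Nat.succ_ne_zero m)]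
      exact Ideal.le_radical
  have hr₂ : J₂.radical = I₂ := by
    apply le_antisymm
    · rw [← h₂.radical]
      exact Ideal.radical_mono (sup_le hI2 (Ideal.pow_le_self (Nat.succ_ne_zero m)))
    · refine le_trans ?_ (Ideal.radical_mono (le_sup_right (a := I) (b := I₂ ^ n)))
      rw [hn', Ideal.radical_pow _ (Nat.succ_ne_zero m)]
      exact Ideal.le_radical
  refine ⟨J₁, J₂, htop, hJI, hr₁, hr₂, ?_⟩
  exact ⟨(Ideal.quotEquivOfEq hJI.symm).trans (Ideal.quotientInfEquivQuotientProd J₁ J₂ hcop)⟩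
end

section
/- Let R be a commutative noetherian ring. Then the prime spectrum Spec R is a finite set if and only if R has only finitely many maximal ideals and the Krull dimension of R is at most 1. -/
open IsLocalRing

lemma isArtinian_of_quotient_action {S : Type*} [CommRing S] (n : Ideal S)
    (M : Type*) [AddCommGroup M] [Module S M]
    [Module (S ⧸ n) M] [IsScalarTower S (S ⧸ n) M] [IsArtinian (S ⧸ n) M] :
    IsArtinian S M := by
  let f : Submodule S M → Submodule (S ⧸ n) M := fun N =>
    { carrier := N
      add_mem' := fun ha hb => N.add_mem ha hb
      zero_mem' := N.zero_mem
      smul_mem' := by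
        rintro c x hx
        obtain ⟨s, rfl⟩ := Ideal.Quotient.mk_surjective c
        have hs : (Ideal.Quotient.mk n s) • x = s • x := by
          rw [← Ideal.Quotient.algebraMap_eq, algebraMap_smul]
        rw [hs]; exact N.smul_mem s hx }
  have hle : ∀ N N' : Submodule S M, f N ≤ f N' ↔ N ≤ N' := fun N N' => Iff.rfl
  have hlt : ∀ N N' : Submodule S M, N < N' → f N < f N' := by
    intro N N' h
    rw [lt_iff_le_not_ge] at h ⊢
    exact ⟨(hle _ _).2 h.1, fun hc => h.2 ((hle _ _).1 hc)⟩
  exact ⟨Subrelation.wf (fun {a b} h => hlt a b h) (InvImage.wf f IsWellFounded.wf)⟩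

lemma isArtinian_module_of_maximal_pow {S : Type*} [CommRing S] [IsNoetherianRing S]
    (n : Ideal S) [hn : n.IsMaximal] :
    ∀ (k : ℕ) (M : Type*) [AddCommGroup M] [Module S M] [Module.Finite S M],
      n ^ k • (⊤ : Submodule S M) = ⊥ → IsArtinian S M := by
  intro k
  induction k with
  | zero =>
    intro M _ _ _ h
    rw [pow_zero, Ideal.one_eq_top, Submodule.top_smul] at h
    haveI : Subsingleton M := by
      refine subsingleton_of_forall_eq 0 fun x => ?_
      have hx : x ∈ (⊥ : Submodule S M) := h ▸ Submodule.mem_top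
      simpa using hx
    infer_instance
  | succ k ih =>
    intro M _ _ hfin h
    haveI := hfin
    haveI : IsNoetherian S M := isNoetherian_of_isNoetherianRing_of_finite S M
    haveI : IsArtinian (S ⧸ n) (M ⧸ (n • ⊤ : Submodule S M)) := by
      haveI : IsArtinianRing (S ⧸ n) := by
        letI := Ideal.Quotient.field n
        exact inferInstance
      haveI : Module.Finite S (M ⧸ (n • ⊤ : Submodule S M)) :=
        Module.Finite.of_surjective (n • ⊤ : Submodule S M).mkQ (Submodule.mkQ_surjective _)
      haveI : Module.Finite (S ⧸ n) (M ⧸ (n • ⊤ : Submodule S M)) :=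
        Module.Finite.of_restrictScalars_finite S (S ⧸ n) _
      infer_instance
    haveI : IsArtinian S (M ⧸ (n • ⊤ : Submodule S M)) :=
      isArtinian_of_quotient_action n _
    haveI : IsArtinian S (n • ⊤ : Submodule S M) := by
      haveI : Module.Finite S (n • ⊤ : Submodule S M) :=
        Module.Finite.iff_fg.2 (IsNoetherian.noetherian _)
      apply ih
      rw [eq_bot_iff]
      refine Submodule.smul_le.2 fun s hs y _ => ?_
      have hy : (y : M) ∈ (n • ⊤ : Submodule S M) := y.2
      have hsy : s • (y : M) ∈ (⊥ : Submodule S M) := by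
        rw [← h, pow_succ, mul_smul]
        exact Submodule.smul_mem_smul hs hy
      simp only [Submodule.mem_bot] at hsy ⊢
      exact Subtype.ext (by simpa using hsy)
    exact (isArtinian_iff_submodule_quotient (n • ⊤ : Submodule S M)).2 ⟨‹_›, ‹_›⟩

lemma isArtinianRing_of_maximal_pow_eq_bot {S : Type*} [CommRing S] [IsNoetherianRing S]
    (n : Ideal S) [n.IsMaximal] (k : ℕ) (h : n ^ k = ⊥) : IsArtinianRing S := by
  apply isArtinian_module_of_maximal_pow n k S
  rw [smul_eq_mul, Ideal.mul_top, h]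


section CoreLemma

lemma lemC {A : Type*} [CommRing A] [IsDomain A] [IsLocalRing A] [IsNoetherianRing A]
    (hfin : {P : Ideal A | P.IsPrime}.Finite) {q : Ideal A} (hq : q.IsPrime)
    (h0 : ⊥ < q) (hm : q < maximalIdeal A) : False := by
  classical
  have hmmax : (maximalIdeal A).IsMaximal := maximalIdeal.isMaximal A
  have hFfin : {P : Ideal A | P.IsPrime ∧ P ≠ maximalIdeal A}.Finite :=
    hfin.subset fun P hP => hP.1
  -- prime avoidance
  obtain ⟨x, hxm, hxP⟩ : ∃ x ∈ maximalIdeal A,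
      ∀ P : Ideal A, P.IsPrime → P ≠ maximalIdeal A → x ∉ P := by
    by_contra hcon
    push_neg at hcon
    have hsub : (maximalIdeal A : Set A) ⊆
        ⋃ P ∈ (hFfin.toFinset : Set (Ideal A)), ((id P : Ideal A) : Set A) := by
      intro a ha
      obtain ⟨P, hP1, hP2, haP⟩ := hcon a ha
      exact Set.mem_biUnion (by simp only [Set.Finite.coe_toFinset]; exact ⟨hP1, hP2⟩) haP
    obtain ⟨P, hPs, hmP⟩ := (Ideal.subset_union_prime (s := hFfin.toFinset) (f := id) ⊥ ⊥
      (fun P hP _ _ => (hFfin.mem_toFinset.1 hP).1)).1 hsub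
    obtain ⟨hP1, hP2⟩ := hFfin.mem_toFinset.1 hPs
    exact hP2 (le_antisymm (le_maximalIdeal hP1.ne_top) hmP)
  have hxq : x ∉ q := hxP q hq (ne_of_lt hm)
  set J : Ideal A := Ideal.span {x} with hJdef
  have hxJ : x ∈ J := Ideal.subset_span rfl
  have hJm : J ≤ maximalIdeal A := Ideal.span_le.2 (by simpa using hxm)
  have hJtop : J ≠ ⊤ := fun h => hmmax.ne_top (top_le_iff.1 (h ▸ hJm))
  -- radical of J is the maximal ideal
  have hradJ : maximalIdeal A ≤ J.radical := by
    rw [Ideal.radical_eq_sInf]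
    refine le_sInf fun P hP => ?_
    obtain ⟨hJP, hPprime⟩ := hP
    rcases eq_or_ne P (maximalIdeal A) with rfl | hne
    · exact le_rfl
    · exact ((hxP P hPprime hne) (hJP hxJ)).elim
  obtain ⟨k, hk⟩ := Ideal.exists_pow_le_of_le_radical_of_fg hradJ (IsNoetherian.noetherian _)
  -- S = A / J is an artinian local ring
  haveI : Nontrivial (A ⧸ J) := Ideal.Quotient.nontrivial_iff.mpr hJtop
  haveI : IsLocalRing (A ⧸ J) :=
    IsLocalRing.of_surjective' (Ideal.Quotient.mk J) Ideal.Quotient.mk_surjective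
  have hmm : maximalIdeal (A ⧸ J) ≤ (maximalIdeal A).map (Ideal.Quotient.mk J) := by
    intro y hy
    obtain ⟨a, rfl⟩ := Ideal.Quotient.mk_surjective y
    have ham : a ∈ maximalIdeal A := by
      by_contra ha
      rw [mem_maximalIdeal, mem_nonunits_iff, not_not] at ha
      have hy' := (mem_maximalIdeal _).1 hy
      rw [mem_nonunits_iff] at hy'
      exact hy' (ha.map (Ideal.Quotient.mk J))
    exact Ideal.mem_map_of_mem _ ham
  have hpow : (maximalIdeal (A ⧸ J)) ^ k = ⊥ := by
    rw [eq_bot_iff]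
    calc (maximalIdeal (A ⧸ J)) ^ k
        ≤ ((maximalIdeal A).map (Ideal.Quotient.mk J)) ^ k := Ideal.pow_right_mono hmm k
      _ = ((maximalIdeal A) ^ k).map (Ideal.Quotient.mk J) := (Ideal.map_pow _ _ _).symm
      _ ≤ J.map (Ideal.Quotient.mk J) := Ideal.map_mono hk
      _ = ⊥ := Ideal.map_quotient_self J
  haveI : IsArtinianRing (A ⧸ J) := isArtinianRing_of_maximal_pow_eq_bot _ k hpow
  -- symbolic powers of q
  haveI := hq
  set B := Localization.AtPrime q with hBdef
  haveI : IsNoetherianRing B := IsLocalization.isNoetherianRing q.primeCompl B inferInstance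
  set φ := algebraMap A B with hφdef
  set Q : Ideal B := q.map φ with hQdef
  set sp : ℕ → Ideal A := fun i => (Q ^ i).comap φ with hspdef
  have hmono : ∀ i, sp (i+1) ≤ sp i := fun i =>
    Ideal.comap_mono (Ideal.pow_le_pow_right (Nat.le_succ i))
  have hanti : Antitone sp := antitone_nat_of_succ_le hmono
  have hprim : ∀ i c, x * c ∈ sp i → c ∈ sp i := by
    intro i c hc
    have hu : IsUnit (φ x) := IsLocalization.map_units B (⟨x, hxq⟩ : q.primeCompl)
    have h1 : φ x * φ c ∈ Q ^ i := by rw [← map_mul]; exact hc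
    have h2 : φ c ∈ Q ^ i := by
      have h3 := Ideal.mul_mem_left _ ((hu.unit⁻¹ : Bˣ) : B) h1
      rwa [← mul_assoc, hu.val_inv_mul, one_mul] at h3
    exact h2
  -- stabilization of sp i + J modulo J
  let f : ℕ →o (Ideal (A ⧸ J))ᵒᵈ :=
    ⟨fun i => OrderDual.toDual ((sp i ⊔ J).map (Ideal.Quotient.mk J)),
      fun i j hij => Ideal.map_mono (sup_le_sup_right (hanti hij) J)⟩
  obtain ⟨n₀, hn₀⟩ := IsArtinian.monotone_stabilizes f
  have hstab : sp n₀ ⊔ J = sp (n₀+1) ⊔ J := by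
    have h1 : ((sp n₀ ⊔ J).map (Ideal.Quotient.mk J))
        = ((sp (n₀+1) ⊔ J).map (Ideal.Quotient.mk J)) := congrArg OrderDual.ofDual (hn₀ (n₀+1) (Nat.le_succ _))
    have h2 := congrArg (Ideal.comap (Ideal.Quotient.mk J)) h1
    rwa [Ideal.comap_map_of_surjective _ Ideal.Quotient.mk_surjective,
      Ideal.comap_map_of_surjective _ Ideal.Quotient.mk_surjective,
      ← RingHom.ker_eq_comap_bot, Ideal.mk_ker, sup_assoc, sup_idem, sup_assoc, sup_idem] at h2
  have hsub : sp n₀ ≤ sp (n₀+1) ⊔ J • sp n₀ := by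
    intro a ha
    have h1 : a ∈ sp (n₀+1) ⊔ J := hstab ▸ Ideal.mem_sup_left ha
    obtain ⟨b, hb, j, hj, rfl⟩ := Submodule.mem_sup.1 h1
    obtain ⟨c, rfl⟩ := Ideal.mem_span_singleton'.1 hj
    have hcx : x * c ∈ sp n₀ := by
      have h2 : b + c * x - b ∈ sp n₀ := Submodule.sub_mem _ ha (hmono n₀ hb)
      rwa [add_sub_cancel_left, mul_comm] at h2
    have hcc : c ∈ sp n₀ := hprim n₀ c hcx
    refine Submodule.add_mem_sup hb ?_
    rw [smul_eq_mul, mul_comm c x]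
    exact Ideal.mul_mem_mul hxJ hcc
  have heq : sp n₀ = sp (n₀+1) :=
    le_antisymm (Submodule.le_of_le_smul_of_le_jacobson_bot (IsNoetherian.noetherian _)
      (le_trans hJm (maximalIdeal_le_jacobson ⊥)) hsub) (hmono n₀)
  have hQ : Q ^ n₀ = Q ^ (n₀ + 1) := by
    have h1 := congrArg (Ideal.map φ) heq
    exact (IsLocalization.map_comap q.primeCompl B (Q ^ n₀)).symm.trans
      (h1.trans (IsLocalization.map_comap q.primeCompl B _))
  have hQbot : Q ^ n₀ = ⊥ := by
    refine Submodule.eq_bot_of_le_smul_of_le_jacobson_bot Q (Q ^ n₀) (IsNoetherian.noetherian _)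
      ?_ ?_
    · rw [smul_eq_mul]
      calc Q ^ n₀ = Q ^ (n₀+1) := hQ
        _ ≤ Q * Q ^ n₀ := by rw [pow_succ, mul_comm]
    · have : Q = maximalIdeal B := Localization.AtPrime.map_eq_maximalIdeal
      rw [this]
      exact maximalIdeal_le_jacobson ⊥
  have hinj : Function.Injective φ := IsLocalization.injective B q.primeCompl_le_nonZeroDivisors
  have hker : q ^ n₀ ≤ ⊥ := by
    intro a ha
    have h1 : φ a ∈ Q ^ n₀ := by
      rw [hQdef, ← Ideal.map_pow]
      exact Ideal.mem_map_of_mem _ ha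
    rw [hQbot] at h1
    have h2 : φ a = 0 := h1
    simpa using hinj (h2.trans (map_zero φ).symm)
  haveI : (⊥ : Ideal A).IsPrime := Ideal.bot_prime
  have hqbot : q ≤ ⊥ := Ideal.IsPrime.le_of_pow_le hker
  exact absurd (le_antisymm hqbot bot_le) (ne_of_gt h0)

end CoreLemma


lemma lemC' {A : Type*} [CommRing A] [IsLocalRing A] [IsNoetherianRing A]
    (hfin : {P : Ideal A | P.IsPrime}.Finite) {p₀ q : Ideal A}
    (hp₀ : p₀.IsPrime) (hq : q.IsPrime) (h01 : p₀ < q) (hm : q < maximalIdeal A) : False := by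
  haveI := hp₀
  haveI : Nontrivial (A ⧸ p₀) := Ideal.Quotient.nontrivial_iff.mpr hp₀.ne_top
  haveI : IsLocalRing (A ⧸ p₀) :=
    IsLocalRing.of_surjective' (Ideal.Quotient.mk p₀) Ideal.Quotient.mk_surjective
  have hfin' : {P : Ideal (A ⧸ p₀) | P.IsPrime}.Finite := by
    have hinj : Set.InjOn (fun P : Ideal (A ⧸ p₀) => P.comap (Ideal.Quotient.mk p₀))
        {P | P.IsPrime} := by
      intro P _ P' _ h
      have h2 := congrArg (Ideal.map (Ideal.Quotient.mk p₀)) h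
      rwa [Ideal.map_comap_of_surjective _ Ideal.Quotient.mk_surjective,
        Ideal.map_comap_of_surjective _ Ideal.Quotient.mk_surjective] at h2
    refine Set.Finite.of_finite_image (hfin.subset ?_) hinj
    rintro _ ⟨P, hP, rfl⟩
    haveI : P.IsPrime := hP
    exact Ideal.IsPrime.comap _
  have hker : RingHom.ker (Ideal.Quotient.mk p₀) = p₀ := Ideal.mk_ker
  have hqprime : (q.map (Ideal.Quotient.mk p₀)).IsPrime :=
    Ideal.map_isPrime_of_surjective Ideal.Quotient.mk_surjective (by rw [hker]; exact h01.le)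
  have hcomap : (q.map (Ideal.Quotient.mk p₀)).comap (Ideal.Quotient.mk p₀) = q := by
    rw [Ideal.comap_map_of_surjective _ Ideal.Quotient.mk_surjective,
      ← RingHom.ker_eq_comap_bot, hker, sup_eq_left.2 h01.le]
  have h0 : ⊥ < q.map (Ideal.Quotient.mk p₀) := by
    rcases eq_or_ne (q.map (Ideal.Quotient.mk p₀)) ⊥ with hbot | hbot
    · exfalso
      have hle : q ≤ p₀ := by
        have h3 := Ideal.map_le_iff_le_comap.1 (le_of_eq hbot)
        rwa [← RingHom.ker_eq_comap_bot, hker] at h3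
      exact (not_le_of_gt h01) hle
    · exact bot_lt_iff_ne_bot.2 hbot
  have hmq : q.map (Ideal.Quotient.mk p₀) < maximalIdeal (A ⧸ p₀) := by
    rcases lt_or_eq_of_le (le_maximalIdeal hqprime.ne_top) with h | h
    · exact h
    · exfalso
      haveI : (q.map (Ideal.Quotient.mk p₀)).IsMaximal := h ▸ maximalIdeal.isMaximal _
      have hqmax : q.IsMaximal := by
        have h4 := Ideal.comap_isMaximal_of_surjective (f := Ideal.Quotient.mk p₀)
          Ideal.Quotient.mk_surjective (K := q.map (Ideal.Quotient.mk p₀))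
        rwa [hcomap] at h4
      exact hm.ne (hqmax.eq_of_le (maximalIdeal.isMaximal A).ne_top hm.le)
  exact lemC hfin' hqprime h0 hmq

lemma lemB {R : Type*} [CommRing R] [IsNoetherianRing R] [Finite (PrimeSpectrum R)]
    (p₀ p₁ p₂ : PrimeSpectrum R) (h01 : p₀ < p₁) (h12 : p₁ < p₂) : False := by
  let A := Localization.AtPrime p₂.asIdeal
  haveI : IsNoetherianRing A := IsLocalization.isNoetherianRing p₂.asIdeal.primeCompl A inferInstance
  have hfinR : {P : Ideal R | P.IsPrime}.Finite := by
    have h1 : {P : Ideal R | P.IsPrime} ⊆ Set.range (PrimeSpectrum.asIdeal (R := R)) :=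
      fun P hP => ⟨⟨P, hP⟩, rfl⟩
    exact (Set.finite_range _).subset h1
  have hfinA : {P : Ideal A | P.IsPrime}.Finite := by
    have hinj : Set.InjOn (fun P : Ideal A => P.comap (algebraMap R A)) {P | P.IsPrime} := by
      intro P _ P' _ h
      have h2 := congrArg (Ideal.map (algebraMap R A)) h
      rwa [IsLocalization.map_comap p₂.asIdeal.primeCompl A,
        IsLocalization.map_comap p₂.asIdeal.primeCompl A] at h2
    refine Set.Finite.of_finite_image (hfinR.subset ?_) hinj
    rintro _ ⟨P, hP, rfl⟩
    haveI : P.IsPrime := hP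
    exact Ideal.IsPrime.comap _
  have hd : ∀ p : PrimeSpectrum R, p ≤ p₂ →
      Disjoint (p₂.asIdeal.primeCompl : Set R) (p.asIdeal : Set R) := by
    intro p hp
    rw [Set.disjoint_left]
    intro a ha hap
    exact ha (hp hap)
  let oi := IsLocalization.orderIsoOfPrime p₂.asIdeal.primeCompl A
  let Q₀ := oi.symm ⟨p₀.asIdeal, p₀.isPrime, hd p₀ (h01.trans h12).le⟩
  let Q₁ := oi.symm ⟨p₁.asIdeal, p₁.isPrime, hd p₁ h12.le⟩
  have hQ01 : Q₀.1 < Q₁.1 := by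
    refine Subtype.coe_lt_coe.2 (oi.symm.lt_iff_lt.2 ?_)
    exact Subtype.mk_lt_mk.2 ((PrimeSpectrum.asIdeal_lt_asIdeal _ _).2 h01)
  have hQ1m : Q₁.1 < maximalIdeal A := by
    rcases lt_or_eq_of_le (le_maximalIdeal Q₁.2.ne_top) with h | h
    · exact h
    · exfalso
      have h1 : Ideal.comap (algebraMap R A) Q₁.1 = p₁.asIdeal :=
        congrArg Subtype.val (oi.apply_symm_apply ⟨p₁.asIdeal, p₁.isPrime, hd p₁ h12.le⟩)
      rw [h] at h1
      have h2 : (maximalIdeal A).comap (algebraMap R A) = p₂.asIdeal :=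
        Localization.AtPrime.comap_maximalIdeal
      exact h12.ne (PrimeSpectrum.ext (h1 ▸ h2))
  exact lemC' hfinA Q₀.2 Q₁.2 hQ01 hQ1m

/-- For a commutative noetherian ring `R`, the prime spectrum `Spec R` is finite if and only
if `R` has only finitely many maximal ideals and the Krull dimension of `R` is at most `1`. -/
theorem stmt_9 {R : Type*} [CommRing R] [IsNoetherianRing R] :
    Finite (PrimeSpectrum R) ↔
      {I : Ideal R | I.IsMaximal}.Finite ∧ ringKrullDim R ≤ 1 := by
  constructor
  · intro hfin
    refine ⟨?_, ?_⟩
    · have h1 : {I : Ideal R | I.IsMaximal} ⊆ Set.range (PrimeSpectrum.asIdeal (R := R)) :=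
        fun I hI => ⟨⟨I, hI.isPrime⟩, rfl⟩
      exact (Set.finite_range _).subset h1
    · rw [ringKrullDim, Order.krullDim]
      refine iSup_le fun p => ?_
      rcases le_or_gt p.length 1 with h | h
      · exact_mod_cast h
      · exfalso
        have h2 : 2 ≤ p.length := h
        exact lemB (p ⟨0, by omega⟩) (p ⟨1, by omega⟩) (p ⟨2, by omega⟩)
          (p.strictMono (Fin.mk_lt_mk.2 (by omega))) (p.strictMono (Fin.mk_lt_mk.2 (by omega)))
  · rintro ⟨hmax, hdim⟩
    rw [← Set.finite_univ_iff]
    have hsub : (Set.univ : Set (PrimeSpectrum R)) ⊆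
        {x | IsMin x} ∪ (PrimeSpectrum.asIdeal ⁻¹' {I | I.IsMaximal}) := by
      intro p _
      by_contra hp
      rw [Set.mem_union] at hp
      push_neg at hp
      obtain ⟨hmin, hmaxp⟩ := hp
      obtain ⟨q, hq⟩ := not_isMin_iff.1 hmin
      obtain ⟨M, hM, hle⟩ := p.asIdeal.exists_le_maximal p.isPrime.ne_top
      have hlt : p < (⟨M, hM.isPrime⟩ : PrimeSpectrum R) := by
        refine lt_of_le_of_ne hle fun hc => ?_
        exact hmaxp (by rw [hc]; exact hM)
      let c : LTSeries (PrimeSpectrum R) :=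
        ⟨2, ![q, p, ⟨M, hM.isPrime⟩], fun i => by fin_cases i; exacts [hq, hlt]⟩
      have h2 := Order.LTSeries.length_le_krullDim c
      have h3 : ((2 : ℕ) : WithBot (WithTop ℕ)) ≤ ringKrullDim R := by
        exact h2
      have h4 := h3.trans hdim
      norm_cast at h4
    refine Set.Finite.subset (Set.Finite.union (PrimeSpectrum.finite_setOf_isMin R)
      (hmax.preimage ?_)) hsub
    exact Function.Injective.injOn fun a b hab => PrimeSpectrum.ext hab
end
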